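/- Let n ≥ 2 and 1 ≤ m ≤ n, and let φ be a phase function satisfying the homogeneous convex conditions as in the context. There exists a constant C > 0, depending only on n and on φ, such that the following holds for every K ≥ C. Let α_i ∈ ℝ^n and a_{i,n+1} ∈ ℝ for i = 1,…,n+1−m, and let L and V⁻ be as in the context. Suppose η ∈ S^{n−1} satisfies η ∈ L and Ang(η, v) > π/2 − K^{−2} for every nonzero v ∈ V⁻. Then L ⊂ {ξ ∈ ℝ^n : Ang(ξ, η) ≤ C K^{−2}}. (Lemma 4.5: tangential case for general cones.) -/

import Mathlib

open MeasureTheory Real RealInnerProductSpace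

noncomputable section

/-- The angle between two vectors of a real inner product space. -/
def ang {E : Type*} [NormedAddCommGroup E] [InnerProductSpace ℝ E] (v w : E) : ℝ :=
  Real.arccos (⟪v, w⟫ / (‖v‖ * ‖w‖))

end

/-- The homogeneous convex conditions on a phase function `φ`. -/
def HomogConvex (n : ℕ) (φ : EuclideanSpace ℝ (Fin n) → ℝ) : Prop :=
  ContDiffOn ℝ (⊤ : ℕ∞) φ {ξ : EuclideanSpace ℝ (Fin n) | ξ ≠ 0} ∧
  (∀ l : ℝ, 0 < l → ∀ ξ, φ (l • ξ) = l * φ ξ) ∧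
  (∀ ξ : EuclideanSpace ℝ (Fin n), ‖ξ‖ = 1 →
    ∀ v : EuclideanSpace ℝ (Fin n), ⟪ξ, v⟫ = 0 →
      (1 / 2) * ‖v‖ ^ 2 ≤ iteratedFDeriv ℝ 2 φ ξ ![v, v] ∧
      iteratedFDeriv ℝ 2 φ ξ ![v, v] ≤ 2 * ‖v‖ ^ 2)

open Set

noncomputable section

namespace GCT


variable {n : ℕ} {φ : EuclideanSpace ℝ (Fin n) → ℝ}


/-- If `f' ≥ 0` on `[0,1]` then `f 0 ≤ f t` there. -/
private lemma mono_aux {f f' : ℝ → ℝ}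
    (hd : ∀ t ∈ Set.Icc (0:ℝ) 1, HasDerivAt f (f' t) t)
    (h0 : ∀ t ∈ Set.Icc (0:ℝ) 1, 0 ≤ f' t) :
    ∀ t ∈ Set.Icc (0:ℝ) 1, f 0 ≤ f t := by
  have hmono : MonotoneOn f (Set.Icc (0:ℝ) 1) := by
    apply monotoneOn_of_deriv_nonneg (convex_Icc 0 1)
    · exact fun t ht => (hd t ht).continuousAt.continuousWithinAt
    · intro t ht
      rw [interior_Icc] at ht
      exact ((hd t (Set.Ioo_subset_Icc_self ht)).differentiableAt).differentiableWithinAt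
    · intro t ht
      rw [interior_Icc] at ht
      rw [(hd t (Set.Ioo_subset_Icc_self ht)).deriv]
      exact h0 t (Set.Ioo_subset_Icc_self ht)
  intro t ht
  exact hmono (Set.left_mem_Icc.2 zero_le_one) ht ht.1

private lemma taylor2_lower {g g' g'' : ℝ → ℝ} {m : ℝ}
    (h1 : ∀ t ∈ Set.Icc (0:ℝ) 1, HasDerivAt g (g' t) t)
    (h2 : ∀ t ∈ Set.Icc (0:ℝ) 1, HasDerivAt g' (g'' t) t)
    (hm : ∀ t ∈ Set.Icc (0:ℝ) 1, m ≤ g'' t) :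
    g 0 + g' 0 + m / 2 ≤ g 1 := by
  have step1 : ∀ t ∈ Set.Icc (0:ℝ) 1, g' 0 + m * t ≤ g' t := by
    have := mono_aux (f := fun t => g' t - m * t) (f' := fun t => g'' t - m)
      (fun t ht => by
        have h := (h2 t ht).sub (((hasDerivAt_id t).const_mul m))
        rw [mul_one] at h
        exact h)
      (fun t ht => by simpa using hm t ht)
    intro t ht
    have h := this t ht
    simp only [mul_zero, sub_zero] at h
    linarith
  have step2 := mono_aux (f := fun t => g t - g' 0 * t - m / 2 * t ^ 2)
      (f' := fun t => g' t - g' 0 - m * t)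
      (fun t ht => by
        have : HasDerivAt (fun t : ℝ => g t - g' 0 * t - m / 2 * t ^ 2)
            (g' t - g' 0 * 1 - m / 2 * (2 * t ^ 1)) t :=
          ((h1 t ht).sub ((hasDerivAt_id t).const_mul (g' 0))).sub
            ((hasDerivAt_pow 2 t).const_mul (m / 2))
        convert this using 1
        ring)
      (fun t ht => by
        have := step1 t ht
        linarith)
  have h := step2 1 (Set.right_mem_Icc.2 zero_le_one)
  simp only [mul_zero, mul_one, sub_zero, zero_pow, one_pow] at h
  · linarith

private lemma arith_bilin {X D a b : ℝ} (ha : 0 < a) (hb : 0 < b)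
    (key : X * (b * a * D) ≤ b ^ 2 * a ^ 2 + a ^ 2 * b ^ 2) : X * D ≤ 2 * (a * b) := by
  have hab : 0 < a * b := mul_pos ha hb
  refine le_of_mul_le_mul_left ?_ hab
  nlinarith [key]

private lemma arith_hm {b R A s2 : ℝ} (hbnn : 0 ≤ b) (hRpos : 0 < R) (hle1 : R ^ 2 ≤ 1)
    (q0 : 0 ≤ A) (q2 : b * R ^ 2 - s2 ≤ 2 * R ^ 3 * A) (hs2 : s2 ≤ b / 2 * R ^ 2) :
    b / 4 ≤ A := by
  have hRle : R ≤ 1 := by nlinarith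
  have hcube : R ^ 3 ≤ R ^ 2 := by
    nlinarith [mul_nonneg (mul_nonneg hRpos.le hRpos.le) (sub_nonneg.2 hRle)]
  have step : b / 2 * R ^ 2 ≤ 2 * R ^ 2 * A := by
    nlinarith [mul_nonneg (sub_nonneg.2 hcube) q0]
  by_contra hcon
  push_neg at hcon
  have h2 : (0:ℝ) < R ^ 2 := by positivity
  nlinarith [mul_lt_mul_of_pos_left hcon h2]

lemma hca (hφ : HomogConvex n φ) {x : EuclideanSpace ℝ (Fin n)} (hx : x ≠ 0) :
    ContDiffAt ℝ (⊤ : ℕ∞) φ x :=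
  hφ.1.contDiffAt ((isOpen_ne (x := (0 : EuclideanSpace ℝ (Fin n)))).mem_nhds hx)

lemma hfd (hφ : HomogConvex n φ) {x : EuclideanSpace ℝ (Fin n)} (hx : x ≠ 0) :
    HasFDerivAt φ (fderiv ℝ φ x) x :=
  ((hca hφ hx).differentiableAt (by simp)).hasFDerivAt

lemma hGd (hφ : HomogConvex n φ) {x : EuclideanSpace ℝ (Fin n)} (hx : x ≠ 0) :
    HasFDerivAt (fderiv ℝ φ) (fderiv ℝ (fderiv ℝ φ) x) x := by
  have h : ContDiffAt ℝ 1 (fderiv ℝ φ) x := (hca hφ hx).fderiv_right (WithTop.coe_le_coe.2 le_top)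
  exact (h.differentiableAt one_ne_zero).hasFDerivAt

lemma grad_inner (hφ : HomogConvex n φ) (z v : EuclideanSpace ℝ (Fin n)) :
    ⟪gradient φ z, v⟫ = fderiv ℝ φ z v := by
  rw [gradient, InnerProductSpace.toDual_symm_apply]

/-- 0-homogeneity of the derivative. -/
lemma fderiv_homog (hφ : HomogConvex n φ) {l : ℝ} (hl : 0 < l)
    {x : EuclideanSpace ℝ (Fin n)} (hx : x ≠ 0) :
    fderiv ℝ φ (l • x) = fderiv ℝ φ x := by
  have hlx : l • x ≠ 0 := smul_ne_zero (ne_of_gt hl) hx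
  have hsm : HasFDerivAt (fun z : EuclideanSpace ℝ (Fin n) => l • z)
      (l • ContinuousLinearMap.id ℝ (EuclideanSpace ℝ (Fin n))) x := by
    exact (hasFDerivAt_id x).const_smul l
  have h1 : HasFDerivAt (fun z => φ (l • z))
      ((fderiv ℝ φ (l • x)).comp (l • ContinuousLinearMap.id ℝ (EuclideanSpace ℝ (Fin n)))) x :=
    (hfd hφ hlx).comp x hsm
  have heq : (fun z : EuclideanSpace ℝ (Fin n) => φ (l • z)) = fun z => l * φ z :=
    funext fun z => hφ.2.1 l hl z
  rw [heq] at h1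
  have h2 : HasFDerivAt (fun z => l * φ z) (l • fderiv ℝ φ x) x := (hfd hφ hx).const_mul l
  have h3 := h1.unique h2
  ext v
  have h4 := congrFun (congrArg (fun (T : EuclideanSpace ℝ (Fin n) →L[ℝ] ℝ) => (T : _ → ℝ)) h3) v
  simp only [ContinuousLinearMap.coe_comp', Function.comp_apply, ContinuousLinearMap.smul_apply,
    ContinuousLinearMap.coe_id', id_eq, ContinuousLinearMap.coe_smul'] at h4
  -- h4 : fderiv ℝ φ (l • x) (l • v) = l • (fderiv ℝ φ x v)
  have h5 : l * fderiv ℝ φ (l • x) v = l * fderiv ℝ φ x v := by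
    have h4' : fderiv ℝ φ (l • x) (l • v) = fderiv ℝ φ x (l • v) := by
      simpa using h4
    simpa [_root_.map_smul, smul_eq_mul] using h4'
  exact mul_left_cancel₀ (ne_of_gt hl) h5

/-- Euler's relation. -/
lemma euler (hφ : HomogConvex n φ) {x : EuclideanSpace ℝ (Fin n)} (hx : x ≠ 0) :
    fderiv ℝ φ x x = φ x := by
  have hcurve : HasDerivAt (fun t : ℝ => t • x) x 1 := by
    simpa using (hasDerivAt_id (1 : ℝ)).smul_const x
  have h1 : HasDerivAt (fun t : ℝ => φ (t • x)) (fderiv ℝ φ x x) 1 := by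
    have := (hfd hφ (by simpa using hx : (1:ℝ) • x ≠ 0)).comp_hasDerivAt 1 hcurve
    simpa [Function.comp_def] using this
  have h2 : HasDerivAt (fun t : ℝ => t * φ x) (φ x) 1 := by
    simpa using (hasDerivAt_id (1 : ℝ)).mul_const (φ x)
  have heq : (fun t : ℝ => t * φ x) =ᶠ[nhds 1] fun t => φ (t • x) := by
    filter_upwards [eventually_gt_nhds (by norm_num : (0:ℝ) < 1)] with t ht
    rw [hφ.2.1 t ht]
  exact (h1.unique (h2.congr_of_eventuallyEq heq.symm))

/-- The Hessian annihilates the radial direction. -/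
lemma hess_radial (hφ : HomogConvex n φ) {x : EuclideanSpace ℝ (Fin n)} (hx : x ≠ 0) :
    fderiv ℝ (fderiv ℝ φ) x x = 0 := by
  have hcurve : HasDerivAt (fun t : ℝ => t • x) x 1 := by
    simpa using (hasDerivAt_id (1 : ℝ)).smul_const x
  have h1 : HasDerivAt (fun t : ℝ => fderiv ℝ φ (t • x)) (fderiv ℝ (fderiv ℝ φ) x x) 1 := by
    have := (hGd hφ (by simpa using hx : (1:ℝ) • x ≠ 0)).comp_hasDerivAt 1 hcurve
    simpa [Function.comp_def] using this
  have h2 : HasDerivAt (fun _ : ℝ => fderiv ℝ φ x)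
      (0 : EuclideanSpace ℝ (Fin n) →L[ℝ] ℝ) 1 := hasDerivAt_const 1 _
  have heq : (fun _ : ℝ => fderiv ℝ φ x) =ᶠ[nhds 1] fun t => fderiv ℝ φ (t • x) := by
    filter_upwards [eventually_gt_nhds (by norm_num : (0:ℝ) < 1)] with t ht
    rw [fderiv_homog hφ ht hx]
  exact (h1.unique (h2.congr_of_eventuallyEq heq.symm))

/-- Scaling of the Hessian. -/
lemma hess_scale (hφ : HomogConvex n φ) {l : ℝ} (hl : 0 < l)
    {x : EuclideanSpace ℝ (Fin n)} (hx : x ≠ 0) (v w : EuclideanSpace ℝ (Fin n)) :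
    fderiv ℝ (fderiv ℝ φ) (l • x) v w = l⁻¹ * fderiv ℝ (fderiv ℝ φ) x v w := by
  have hlx : l • x ≠ 0 := smul_ne_zero (ne_of_gt hl) hx
  have hsm : HasFDerivAt (fun z : EuclideanSpace ℝ (Fin n) => l • z)
      (l • ContinuousLinearMap.id ℝ (EuclideanSpace ℝ (Fin n))) x := by
    exact (hasFDerivAt_id x).const_smul l
  have h1 : HasFDerivAt (fun z => fderiv ℝ φ (l • z))
      ((fderiv ℝ (fderiv ℝ φ) (l • x)).comp
        (l • ContinuousLinearMap.id ℝ (EuclideanSpace ℝ (Fin n)))) x :=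
    (hGd hφ hlx).comp x hsm
  have heq : (fun z => fderiv ℝ φ (l • z)) =ᶠ[nhds x] fderiv ℝ φ := by
    filter_upwards [(isOpen_ne (x := (0 : EuclideanSpace ℝ (Fin n)))).mem_nhds hx] with z hz
    exact fderiv_homog hφ hl hz
  have h2 : HasFDerivAt (fderiv ℝ φ)
      ((fderiv ℝ (fderiv ℝ φ) (l • x)).comp
        (l • ContinuousLinearMap.id ℝ (EuclideanSpace ℝ (Fin n)))) x :=
    h1.congr_of_eventuallyEq heq.symm
  have h3 := h2.unique (hGd hφ hx)
  have h4 := congrFun (congrArg (fun (T : _ →L[ℝ] _) => (T : _ → _)) h3) v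
  simp only [ContinuousLinearMap.coe_comp', Function.comp_apply, ContinuousLinearMap.smul_apply,
    ContinuousLinearMap.coe_id', id_eq] at h4
  -- h4 : fderiv ℝ (fderiv ℝ φ) (l • x) (l • v) = fderiv ℝ (fderiv ℝ φ) x v
  have h5 : l • (fderiv ℝ (fderiv ℝ φ) (l • x) v) = fderiv ℝ (fderiv ℝ φ) x v := by
    rw [← _root_.map_smul]; exact h4
  have h6 := congrFun (congrArg (fun (T : _ →L[ℝ] ℝ) => (T : _ → ℝ)) h5) w
  simp only [ContinuousLinearMap.coe_smul', Pi.smul_apply, smul_eq_mul] at h6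
  field_simp
  linarith [h6]

/-- Symmetry of the Hessian. -/
lemma hess_symm (hφ : HomogConvex n φ) {x : EuclideanSpace ℝ (Fin n)} (hx : x ≠ 0)
    (v w : EuclideanSpace ℝ (Fin n)) :
    fderiv ℝ (fderiv ℝ φ) x v w = fderiv ℝ (fderiv ℝ φ) x w v := by
  apply second_derivative_symmetric_of_eventually (f := φ) (f' := fderiv ℝ φ)
  · filter_upwards [(isOpen_ne (x := (0 : EuclideanSpace ℝ (Fin n)))).mem_nhds hx] with z hz
    exact hfd hφ hz
  · exact hGd hφ hx


/-- Hypothesis bounds at a unit point, in Hessian form. -/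
lemma hess_hyp (hφ : HomogConvex n φ) {x : EuclideanSpace ℝ (Fin n)} (hx : ‖x‖ = 1)
    {v : EuclideanSpace ℝ (Fin n)} (hv : ⟪x, v⟫ = 0) :
    (1 / 2) * ‖v‖ ^ 2 ≤ fderiv ℝ (fderiv ℝ φ) x v v ∧
      fderiv ℝ (fderiv ℝ φ) x v v ≤ 2 * ‖v‖ ^ 2 := by
  have h := hφ.2.2 x hx v hv
  rwa [iteratedFDeriv_two_apply] at h

/-- Quadratic bounds at a general point, division-free. -/
lemma hess_quad (hφ : HomogConvex n φ) {x : EuclideanSpace ℝ (Fin n)} (hx : x ≠ 0)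
    (v : EuclideanSpace ℝ (Fin n)) :
    0 ≤ fderiv ℝ (fderiv ℝ φ) x v v ∧
    ‖x‖ * fderiv ℝ (fderiv ℝ φ) x v v ≤ 2 * ‖v‖ ^ 2 ∧
    ‖v‖ ^ 2 * ‖x‖ ^ 2 - ⟪x, v⟫ ^ 2 ≤ 2 * ‖x‖ ^ 3 * fderiv ℝ (fderiv ℝ φ) x v v := by
  have hr : (0:ℝ) < ‖x‖ := norm_pos_iff.2 hx
  have hu1 : ‖(‖x‖⁻¹ • x : EuclideanSpace ℝ (Fin n))‖ = 1 := by
    rw [norm_smul, norm_inv, norm_norm]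
    field_simp
  set u : EuclideanSpace ℝ (Fin n) := ‖x‖⁻¹ • x with hu
  have hune : u ≠ 0 := fun h => by simp [h] at hu1
  set c : ℝ := ⟪x, v⟫ / ‖x‖ ^ 2 with hc
  set vp : EuclideanSpace ℝ (Fin n) := v - c • x with hvp
  have hxvp : ⟪x, vp⟫ = 0 := by
    rw [hvp, inner_sub_right, real_inner_smul_right, real_inner_self_eq_norm_sq, hc]
    field_simp
    simp
  have huvp : ⟪u, vp⟫ = 0 := by
    rw [hu, real_inner_smul_left, hxvp, mul_zero]
  have hxu : x = ‖x‖ • u := by rw [hu, smul_smul]; field_simp; rw [one_smul]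
  have hrad : fderiv ℝ (fderiv ℝ φ) x x = 0 := hess_radial hφ hx
  have e1 : fderiv ℝ (fderiv ℝ φ) x v v = fderiv ℝ (fderiv ℝ φ) x vp vp := by
    have hv' : v = vp + c • x := by rw [hvp]; abel
    have t2 : fderiv ℝ (fderiv ℝ φ) x vp x = 0 := by
      rw [hess_symm hφ hx vp x, hrad]; simp
    conv_lhs => rw [hv']
    simp only [map_add, _root_.map_smul, ContinuousLinearMap.add_apply,
      ContinuousLinearMap.smul_apply, smul_eq_mul]
    rw [t2, hrad]
    simp
  have e2 : fderiv ℝ (fderiv ℝ φ) x vp vp = ‖x‖⁻¹ * fderiv ℝ (fderiv ℝ φ) u vp vp := by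
    have h := hess_scale hφ hr hune vp vp
    rw [← hxu] at h
    exact h
  have hb := hess_hyp hφ hu1 huvp
  have hnvp : ‖vp‖ ^ 2 * ‖x‖ ^ 2 = ‖v‖ ^ 2 * ‖x‖ ^ 2 - ⟪x, v⟫ ^ 2 := by
    have h1 : ‖vp‖ ^ 2 = ‖v‖ ^ 2 - 2 * ⟪v, c • x⟫ + ‖c • x‖ ^ 2 := by
      rw [hvp]; exact norm_sub_sq_real v (c • x)
    have h2 : ⟪v, c • x⟫ = c * ⟪x, v⟫ := by
      rw [real_inner_smul_right, real_inner_comm]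
    have h3 : ‖c • x‖ ^ 2 = c ^ 2 * ‖x‖ ^ 2 := by
      rw [norm_smul, mul_pow, Real.norm_eq_abs, sq_abs]
    rw [h1, h2, h3, hc]
    field_simp
    ring
  have hnvp2 : ‖vp‖ ^ 2 ≤ ‖v‖ ^ 2 := by
    nlinarith [sq_nonneg ⟪x, v⟫, sq_nonneg ‖vp‖, sq_nonneg ‖v‖, hr, hnvp,
      mul_pos hr hr]
  refine ⟨?_, ?_, ?_⟩
  · rw [e1, e2]
    have h0 : 0 ≤ fderiv ℝ (fderiv ℝ φ) u vp vp := le_trans (by positivity) hb.1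
    exact mul_nonneg (by positivity) h0
  · rw [e1, e2]
    have h4 : ‖x‖ * (‖x‖⁻¹ * fderiv ℝ (fderiv ℝ φ) u vp vp) = fderiv ℝ (fderiv ℝ φ) u vp vp := by
      field_simp
    rw [h4]
    linarith [hb.2, hnvp2]
  · rw [e1, e2]
    have h5 : 2 * ‖x‖ ^ 3 * (‖x‖⁻¹ * fderiv ℝ (fderiv ℝ φ) u vp vp)
        = 2 * ‖x‖ ^ 2 * fderiv ℝ (fderiv ℝ φ) u vp vp := by
      field_simp
    rw [h5, ← hnvp]
    have := mul_le_mul_of_nonneg_right hb.1 (sq_nonneg ‖x‖)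
    linarith


/-- Operator-type bound for the Hessian. -/
lemma hess_bilin (hφ : HomogConvex n φ) {x : EuclideanSpace ℝ (Fin n)} (hx : x ≠ 0)
    (v w : EuclideanSpace ℝ (Fin n)) :
    ‖x‖ * |fderiv ℝ (fderiv ℝ φ) x v w| ≤ 2 * (‖v‖ * ‖w‖) := by
  have aux : ∀ v w : EuclideanSpace ℝ (Fin n),
      ‖x‖ * |fderiv ℝ (fderiv ℝ φ) x v w| ≤ ‖v‖ ^ 2 + ‖w‖ ^ 2 := by
    intro v w
    have hs := hess_symm hφ hx v w
    have hpol : 4 * fderiv ℝ (fderiv ℝ φ) x v w =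
        fderiv ℝ (fderiv ℝ φ) x (v + w) (v + w) - fderiv ℝ (fderiv ℝ φ) x (v - w) (v - w) := by
      simp only [map_add, map_sub, ContinuousLinearMap.add_apply, ContinuousLinearMap.sub_apply]
      linarith
    obtain ⟨q1a, q1b, -⟩ := hess_quad hφ hx (v + w)
    obtain ⟨q2a, q2b, -⟩ := hess_quad hφ hx (v - w)
    have hpar : ‖v + w‖ ^ 2 + ‖v - w‖ ^ 2 = 2 * (‖v‖ ^ 2 + ‖w‖ ^ 2) := by
      rw [norm_add_sq_real, norm_sub_sq_real]; ring
    have hr : (0:ℝ) < ‖x‖ := norm_pos_iff.2 hx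
    rw [← abs_of_pos hr, ← abs_mul, abs_le]
    constructor
    · nlinarith [mul_nonneg hr.le q2a, mul_nonneg hr.le q1a, sq_nonneg ‖v - w‖,
        sq_nonneg ‖v + w‖]
    · nlinarith [mul_nonneg hr.le q2a, mul_nonneg hr.le q1a, sq_nonneg ‖v - w‖,
        sq_nonneg ‖v + w‖]
  rcases eq_or_ne v 0 with rfl | hv
  · simp
  rcases eq_or_ne w 0 with rfl | hw
  · simp
  have hva : (0:ℝ) < ‖v‖ := norm_pos_iff.2 hv
  have hwa : (0:ℝ) < ‖w‖ := norm_pos_iff.2 hw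
  have key := aux (‖w‖ • v) (‖v‖ • w)
  have e1 : fderiv ℝ (fderiv ℝ φ) x (‖w‖ • v) (‖v‖ • w)
      = (‖w‖ * ‖v‖) * fderiv ℝ (fderiv ℝ φ) x v w := by
    rw [_root_.map_smul]
    simp [smul_eq_mul]
    ring
  rw [e1, abs_mul, abs_of_pos (mul_pos hwa hva)] at key
  have e2 : ‖(‖w‖ • v)‖ ^ 2 = ‖w‖ ^ 2 * ‖v‖ ^ 2 := by
    rw [norm_smul, Real.norm_eq_abs, mul_pow, sq_abs]
  have e3 : ‖(‖v‖ • w)‖ ^ 2 = ‖v‖ ^ 2 * ‖w‖ ^ 2 := by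
    rw [norm_smul, Real.norm_eq_abs, mul_pow, sq_abs]
  rw [e2, e3] at key
  have hvw : (0:ℝ) < ‖v‖ * ‖w‖ := mul_pos hva hwa
  exact arith_bilin hva hwa key

/-- Convexity along chords between unit vectors in the same hemisphere. -/
lemma chord (hφ : HomogConvex n φ) {x y : EuclideanSpace ℝ (Fin n)}
    (hx1 : ‖x‖ = 1) (hy1 : ‖y‖ = 1) (hc : 0 ≤ ⟪x, y⟫) :
    φ x + fderiv ℝ φ x (y - x) + (1 / 8) * ‖y - x‖ ^ 2 ≤ φ y := by
  set u : EuclideanSpace ℝ (Fin n) := y - x with hu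
  have hcle : ⟪x, y⟫ ≤ 1 := by
    have := real_inner_le_norm x y
    rw [hx1, hy1] at this; linarith
  have hb : ‖u‖ ^ 2 = 2 - 2 * ⟪x, y⟫ := by
    rw [hu, norm_sub_sq_real, hx1, hy1, real_inner_comm]; ring
  have hxu : ⟪x, u⟫ = ⟪x, y⟫ - 1 := by
    rw [hu, inner_sub_right, real_inner_self_eq_norm_sq, hx1]; ring
  set γ : ℝ → EuclideanSpace ℝ (Fin n) := fun t => x + t • u with hγ
  have hγnorm : ∀ t : ℝ, ‖γ t‖ ^ 2 = 1 - t * (1 - t) * ‖u‖ ^ 2 := by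
    intro t
    rw [hγ]
    simp only
    rw [norm_add_sq_real, hx1, real_inner_smul_right, hxu, norm_smul, Real.norm_eq_abs,
      mul_pow, sq_abs]
    linear_combination t * hb
  have hγle : ∀ t ∈ Set.Icc (0:ℝ) 1, ‖γ t‖ ^ 2 ≤ 1 ∧ (1:ℝ)/2 ≤ ‖γ t‖ ^ 2 := by
    intro t ht
    obtain ⟨ht0, ht1⟩ := ht
    rw [hγnorm t]
    constructor
    · nlinarith [mul_nonneg (mul_nonneg ht0 (by linarith : (0:ℝ) ≤ 1 - t)) (sq_nonneg ‖u‖)]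
    · nlinarith [hb, hcle, hc, sq_nonneg (2*t - 1), sq_nonneg ‖u‖,
        mul_nonneg (mul_nonneg ht0 (by linarith : (0:ℝ) ≤ 1 - t)) (sq_nonneg ‖u‖)]
  have hne : ∀ t ∈ Set.Icc (0:ℝ) 1, γ t ≠ 0 := by
    intro t ht h0
    have := (hγle t ht).2
    rw [h0] at this
    simp at this
    linarith
  have hγd : ∀ t : ℝ, HasDerivAt γ u t := by
    intro t
    simpa [hγ] using ((hasDerivAt_id t).smul_const u).const_add x
  have h1 : ∀ t ∈ Set.Icc (0:ℝ) 1,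
      HasDerivAt (fun t => φ (γ t)) (fderiv ℝ φ (γ t) u) t := by
    intro t ht
    exact (hfd hφ (hne t ht)).comp_hasDerivAt t (hγd t)
  have h2 : ∀ t ∈ Set.Icc (0:ℝ) 1,
      HasDerivAt (fun t => fderiv ℝ φ (γ t) u) (fderiv ℝ (fderiv ℝ φ) (γ t) u u) t := by
    intro t ht
    have hcomp := (hGd hφ (hne t ht)).comp_hasDerivAt t (hγd t)
    have := hcomp.clm_apply (hasDerivAt_const t u)
    simpa using this
  have hm : ∀ t ∈ Set.Icc (0:ℝ) 1, ‖u‖ ^ 2 / 4 ≤ fderiv ℝ (fderiv ℝ φ) (γ t) u u := by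
    intro t ht
    obtain ⟨ht0, ht1⟩ := ht
    obtain ⟨q0, -, q2⟩ := hess_quad hφ (hne t ⟨ht0, ht1⟩) u
    have hγu : ⟪γ t, u⟫ = (t - 1/2) * ‖u‖ ^ 2 := by
      rw [hγ]
      simp only
      rw [inner_add_left, real_inner_smul_left, real_inner_self_eq_norm_sq, hxu]
      linear_combination hb / 2
    obtain ⟨hle1, hge12⟩ := hγle t ⟨ht0, ht1⟩
    have hγpos : (0:ℝ) < ‖γ t‖ := by
      have : γ t ≠ 0 := hne t ⟨ht0, ht1⟩
      exact norm_pos_iff.2 this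
    have hble : ‖u‖ ^ 2 ≤ 2 := by nlinarith [hb, hc]
    have hbnn : (0:ℝ) ≤ ‖u‖ ^ 2 := sq_nonneg _
    -- s² ≤ (b/2) r²
    have hs2 : ⟪γ t, u⟫ ^ 2 ≤ ‖u‖ ^ 2 / 2 * ‖γ t‖ ^ 2 := by
      rw [hγu, hγnorm t]
      have e1 : 0 ≤ t * (1 - t) * (‖u‖ ^ 2) ^ 2 :=
        mul_nonneg (mul_nonneg ht0 (by linarith)) (sq_nonneg _)
      have e2 : 0 ≤ ‖u‖ ^ 2 * (2 - ‖u‖ ^ 2) := mul_nonneg hbnn (by linarith)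
      nlinarith [e1, e2]
    exact arith_hm (sq_nonneg _) hγpos hle1 q0 q2 hs2
  have key := taylor2_lower h1 h2 hm
  have e0 : γ 0 = x := by rw [hγ]; simp
  have e1 : γ 1 = y := by rw [hγ, hu]; simp
  rw [e0, e1] at key
  linarith [key]


private lemma arith_lip {r d m : ℝ} (h : r * d ≤ 2 * m) (hr : 1/2 ≤ r ^ 2)
    (hrpos : 0 < r) (hd : 0 ≤ d) (hm : 0 ≤ m) : d ≤ 3 * m := by
  have h23 : (2:ℝ)/3 ≤ r := by nlinarith
  nlinarith [mul_le_mul_of_nonneg_right h23 hd]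

/-- Lipschitz bound for the gradient between unit vectors in the same hemisphere. -/
lemma lip (hφ : HomogConvex n φ) {x y : EuclideanSpace ℝ (Fin n)}
    (hx1 : ‖x‖ = 1) (hy1 : ‖y‖ = 1) (hc : 0 ≤ ⟪x, y⟫) :
    ‖gradient φ y - gradient φ x‖ ≤ 3 * ‖y - x‖ := by
  set w : EuclideanSpace ℝ (Fin n) := gradient φ y - gradient φ x with hw
  rcases eq_or_ne w 0 with h0 | hne0
  · rw [h0]
    simp
  have hwpos : (0:ℝ) < ‖w‖ := norm_pos_iff.2 hne0
  set u : EuclideanSpace ℝ (Fin n) := y - x with hu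
  have hcle : ⟪x, y⟫ ≤ 1 := by
    have := real_inner_le_norm x y
    rw [hx1, hy1] at this; linarith
  have hb : ‖u‖ ^ 2 = 2 - 2 * ⟪x, y⟫ := by
    rw [hu, norm_sub_sq_real, hx1, hy1, real_inner_comm]; ring
  have hxu : ⟪x, u⟫ = ⟪x, y⟫ - 1 := by
    rw [hu, inner_sub_right, real_inner_self_eq_norm_sq, hx1]; ring
  set γ : ℝ → EuclideanSpace ℝ (Fin n) := fun t => x + t • u with hγ
  have hγnorm : ∀ t : ℝ, ‖γ t‖ ^ 2 = 1 - t * (1 - t) * ‖u‖ ^ 2 := by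
    intro t
    rw [hγ]
    simp only
    rw [norm_add_sq_real, hx1, real_inner_smul_right, hxu, norm_smul, Real.norm_eq_abs,
      mul_pow, sq_abs]
    linear_combination t * hb
  have hγge : ∀ t ∈ Set.Icc (0:ℝ) 1, (1:ℝ)/2 ≤ ‖γ t‖ ^ 2 := by
    intro t ht
    obtain ⟨ht0, ht1⟩ := ht
    rw [hγnorm t]
    nlinarith [hb, hcle, hc, sq_nonneg (2*t - 1), sq_nonneg ‖u‖,
      mul_nonneg (mul_nonneg ht0 (by linarith : (0:ℝ) ≤ 1 - t)) (sq_nonneg ‖u‖)]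
  have hne : ∀ t ∈ Set.Icc (0:ℝ) 1, γ t ≠ 0 := by
    intro t ht h0
    have := hγge t ht
    rw [h0] at this
    simp at this
    linarith
  have hγd : ∀ t : ℝ, HasDerivAt γ u t := by
    intro t
    simpa [hγ] using ((hasDerivAt_id t).smul_const u).const_add x
  have hψ : ∀ t ∈ Set.Icc (0:ℝ) 1,
      HasDerivWithinAt (fun t => fderiv ℝ φ (γ t) w)
        (fderiv ℝ (fderiv ℝ φ) (γ t) u w) (Set.Icc (0:ℝ) 1) t := by
    intro t ht
    have hcomp := (hGd hφ (hne t ht)).comp_hasDerivAt t (hγd t)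
    have := hcomp.clm_apply (hasDerivAt_const t w)
    simpa using this.hasDerivWithinAt
  have hbound : ∀ t ∈ Set.Ico (0:ℝ) 1, ‖fderiv ℝ (fderiv ℝ φ) (γ t) u w‖ ≤ 3 * (‖u‖ * ‖w‖) := by
    intro t ht
    have ht' : t ∈ Set.Icc (0:ℝ) 1 := ⟨ht.1, ht.2.le⟩
    have hB := hess_bilin hφ (hne t ht') u w
    have hγpos : (0:ℝ) < ‖γ t‖ := norm_pos_iff.2 (hne t ht')
    rw [Real.norm_eq_abs]
    exact arith_lip hB (hγge t ht') hγpos (abs_nonneg _)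
      (mul_nonneg (norm_nonneg _) (norm_nonneg _))
  have key := norm_image_sub_le_of_norm_deriv_le_segment_01' hψ hbound
  have e1 : γ 1 = y := by rw [hγ, hu]; simp
  have e0 : γ 0 = x := by rw [hγ]; simp
  rw [e0, e1] at key
  have e2 : fderiv ℝ φ y w - fderiv ℝ φ x w = ‖w‖ ^ 2 := by
    rw [← grad_inner hφ y w, ← grad_inner hφ x w, ← inner_sub_left, hw,
      real_inner_self_eq_norm_sq]
  rw [Real.norm_eq_abs, e2, abs_of_nonneg (sq_nonneg _)] at key
  calc ‖w‖ = ‖w‖ ^ 2 / ‖w‖ := by field_simp [hwpos.ne']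
  _ ≤ 3 * (‖u‖ * ‖w‖) / ‖w‖ := by
      gcongr
  _ = 3 * ‖u‖ := by field_simp [hwpos.ne']


/-- Decompose a unit vector against another unit vector. -/
lemma decompose (hn : 2 ≤ n) {x y : EuclideanSpace ℝ (Fin n)}
    (hx1 : ‖x‖ = 1) (hy1 : ‖y‖ = 1) :
    ∃ (u : EuclideanSpace ℝ (Fin n)) (s : ℝ), ‖u‖ = 1 ∧ ⟪x, u⟫ = 0 ∧ 0 ≤ s ∧
      y = ⟪x, y⟫ • x + s • u ∧ s ^ 2 + ⟪x, y⟫ ^ 2 = 1 := by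
  have hxne : x ≠ 0 := by intro h; rw [h] at hx1; simp at hx1
  set c : ℝ := ⟪x, y⟫ with hc
  set p : EuclideanSpace ℝ (Fin n) := y - c • x with hp
  have hxp : ⟪x, p⟫ = 0 := by
    rw [hp, inner_sub_right, real_inner_smul_right, real_inner_self_eq_norm_sq, hx1]
    ring
  have hnp : ‖p‖ ^ 2 = 1 - c ^ 2 := by
    have hyx : ⟪y, x⟫ = c := by rw [hc]; exact real_inner_comm x y
    rw [hp, norm_sub_sq_real, hy1, real_inner_smul_right, norm_smul, Real.norm_eq_abs,
      mul_pow, sq_abs, hx1, hyx]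
    ring
  rcases eq_or_ne p 0 with hp0 | hpne
  · -- y = c • x ; pick any unit vector orthogonal to x
    have horth : ((ℝ ∙ x)ᗮ : Submodule ℝ (EuclideanSpace ℝ (Fin n))) ≠ ⊥ := by
      intro hbot
      have htop : (ℝ ∙ x) = ⊤ := Submodule.orthogonal_eq_bot_iff.1 hbot
      have h1 : Module.finrank ℝ (ℝ ∙ x) = Module.finrank ℝ (EuclideanSpace ℝ (Fin n)) := by
        rw [htop]; exact finrank_top ℝ _
      rw [finrank_span_singleton hxne, finrank_euclideanSpace_fin] at h1
      omega
    obtain ⟨u₀, hu₀mem, hu₀ne⟩ := Submodule.exists_mem_ne_zero_of_ne_bot horth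
    have hxu₀ : ⟪x, u₀⟫ = 0 :=
      Submodule.mem_orthogonal_singleton_iff_inner_right.1 hu₀mem
    have hu₀pos : (0:ℝ) < ‖u₀‖ := norm_pos_iff.2 hu₀ne
    refine ⟨‖u₀‖⁻¹ • u₀, 0, ?_, ?_, le_refl 0, ?_, ?_⟩
    · rw [norm_smul, norm_inv, norm_norm]; field_simp
    · rw [real_inner_smul_right, hxu₀, mul_zero]
    · rw [zero_smul, add_zero]
      have : y - c • x = 0 := hp0
      have := sub_eq_zero.1 this
      exact this
    · have : (0:ℝ) = 1 - c ^ 2 := by rw [← hnp, hp0]; simp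
      nlinarith [this]
  · have hppos : (0:ℝ) < ‖p‖ := norm_pos_iff.2 hpne
    refine ⟨‖p‖⁻¹ • p, ‖p‖, ?_, ?_, norm_nonneg p, ?_, ?_⟩
    · rw [norm_smul, norm_inv, norm_norm]; field_simp
    · rw [real_inner_smul_right, hxp, mul_zero]
    · rw [smul_inv_smul₀ hppos.ne', hp]; abel
    · rw [hnp]; ring

/-- Far case: strong separation when the inner product is negative. -/
lemma far (hφ : HomogConvex n φ) (hn : 2 ≤ n) {x y : EuclideanSpace ℝ (Fin n)}
    (hx1 : ‖x‖ = 1) (hy1 : ‖y‖ = 1) (hcn : ⟪x, y⟫ < 0) :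
    1/4 ≤ φ y - fderiv ℝ φ x y ∧ ‖gradient φ y - gradient φ x‖ ≤ 12 := by
  obtain ⟨u, s, hu1, hxu, hs, hy, hsc⟩ := decompose hn hx1 hy1
  have hxne : x ≠ 0 := by intro h; rw [h] at hx1; simp at hx1
  have hune : u ≠ 0 := by intro h; rw [h] at hu1; simp at hu1
  have hux : ⟪u, x⟫ = 0 := by rw [real_inner_comm]; exact hxu
  have huy : ⟪u, y⟫ = s := by
    rw [hy, inner_add_right, real_inner_smul_right, real_inner_smul_right, hux,
      real_inner_self_eq_norm_sq, hu1]
    ring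
  have hxy2 : ‖x - u‖ ^ 2 = 2 := by
    rw [norm_sub_sq_real, hx1, hu1, hxu]; ring
  have hyx2 : ‖u - x‖ ^ 2 = 2 := by
    rw [norm_sub_sq_real, hx1, hu1, hux]; ring
  have hEx : fderiv ℝ φ x x = φ x := euler hφ hxne
  have hEu : fderiv ℝ φ u u = φ u := euler hφ hune
  -- chord inequalities
  have c2 : fderiv ℝ φ u x ≤ φ x - 1/4 := by
    have h := chord hφ hu1 hx1 (le_of_eq hux.symm)
    rw [map_sub, hEu, hxy2] at h
    linarith
  have c3 : fderiv ℝ φ x u ≤ φ u - 1/4 := by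
    have h := chord hφ hx1 hu1 (le_of_eq hxu.symm)
    rw [map_sub, hEx, hyx2] at h
    linarith
  have c1 : 0 ≤ φ y - fderiv ℝ φ u y := by
    have h := chord hφ hu1 hy1 (by rw [huy]; exact hs)
    rw [map_sub, hEu] at h
    nlinarith [sq_nonneg ‖y - u‖]
  -- decompositions
  have dX : fderiv ℝ φ x y = ⟪x, y⟫ * φ x + s * fderiv ℝ φ x u := by
    conv_lhs => rw [hy]
    rw [map_add, _root_.map_smul, _root_.map_smul, hEx]
    simp [smul_eq_mul]
  have dU : fderiv ℝ φ u y = ⟪x, y⟫ * fderiv ℝ φ u x + s * φ u := by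
    conv_lhs => rw [hy]
    rw [map_add, _root_.map_smul, _root_.map_smul, hEu]
    simp [smul_eq_mul]
  have hs1 : 1 ≤ s - ⟪x, y⟫ := by nlinarith [hsc, hs, hcn]
  constructor
  · have t1 : ⟪x, y⟫ * (φ x - 1/4) ≤ ⟪x, y⟫ * fderiv ℝ φ u x :=
      mul_le_mul_of_nonpos_left c2 hcn.le
    have t2 : s * fderiv ℝ φ x u ≤ s * (φ u - 1/4) :=
      mul_le_mul_of_nonneg_left c3 hs
    linarith [c1, t1, t2, hs1]
  · have l1 : ‖gradient φ y - gradient φ u‖ ≤ 3 * ‖y - u‖ :=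
      lip hφ hu1 hy1 (by rw [huy]; exact hs)
    have l2 : ‖gradient φ u - gradient φ x‖ ≤ 3 * ‖u - x‖ :=
      lip hφ hx1 hu1 (le_of_eq hxu.symm)
    have tri : ‖gradient φ y - gradient φ x‖
        ≤ ‖gradient φ y - gradient φ u‖ + ‖gradient φ u - gradient φ x‖ := by
      have := norm_add_le (gradient φ y - gradient φ u) (gradient φ u - gradient φ x)
      simpa using this
    have n1 : ‖y - u‖ ≤ 2 := by
      have := norm_sub_le y u
      rw [hy1, hu1] at this; linarith
    have n2 : ‖u - x‖ ≤ 2 := by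
      have := norm_sub_le u x
      rw [hx1, hu1] at this; linarith
    linarith


private lemma arith_sin {t s : ℝ} (h0 : 0 ≤ t) (h1 : t ≤ 1) (hlt : t - t^3/4 < s) :
    t/2 ≤ s := by
  nlinarith [mul_nonneg h0 (by nlinarith : (0:ℝ) ≤ 2 - t^2)]

private lemma arith_theta {θ d s : ℝ} (hd : d^2 = 4*s^2) (hs : θ/4 ≤ s) (h0 : 0 ≤ θ)
    (hdn : 0 ≤ d) : θ ≤ 2*d := by
  nlinarith [sq_nonneg (θ - 2*d), sq_nonneg (θ + 2*d)]

end GCT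

/-- Lemma 4.5: tangential case for general cones.  If `η ∈ L ∩ S^{n-1}` is nearly
orthogonal to `V⁻`, then `L` lies in an angular `K^{-2}`-neighborhood of `η`. -/
theorem general_cone_tangential (n m : ℕ) (hn : 2 ≤ n) (hm1 : 1 ≤ m) (hm2 : m ≤ n)
    (φ : EuclideanSpace ℝ (Fin n) → ℝ) (hφ : HomogConvex n φ) :
    ∃ C : ℝ, 0 < C ∧ ∀ K : ℝ, C ≤ K →
      ∀ (α : Fin (n + 1 - m) → EuclideanSpace ℝ (Fin n)) (a : Fin (n + 1 - m) → ℝ)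
        (η : EuclideanSpace ℝ (Fin n)),
        ‖η‖ = 1 →
        (∀ i, ⟪α i, gradient φ η⟫ = a i) →
        (∀ v : EuclideanSpace ℝ (Fin n), v ≠ 0 → (∀ i, ⟪α i, v⟫ = 0) →
          Real.pi / 2 - (K ^ 2)⁻¹ < ang η v) →
        ∀ ξ : EuclideanSpace ℝ (Fin n), 1 / 2 ≤ ‖ξ‖ → ‖ξ‖ ≤ 2 →
          (∀ i, ⟪α i, gradient φ ξ⟫ = a i) →
          ang ξ η ≤ C * (K ^ 2)⁻¹ := by
  refine ⟨100, by norm_num, ?_⟩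
  intro K hK α a η hη1 hηL hang ξ hξlo hξhi hξL
  have hK0 : (0:ℝ) < K := lt_of_lt_of_le (by norm_num) hK
  have hK2 : (10000:ℝ) ≤ K ^ 2 := by nlinarith
  have hK2pos : (0:ℝ) < K ^ 2 := by positivity
  have hinvpos : (0:ℝ) < (K ^ 2)⁻¹ := by positivity
  have hinv : (K ^ 2)⁻¹ ≤ 1 / 10000 := by
    have := inv_anti₀ (by norm_num : (0:ℝ) < 10000) hK2
    simpa using this
  have hξpos : (0:ℝ) < ‖ξ‖ := lt_of_lt_of_le (by norm_num) hξlo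
  have hξne : ξ ≠ 0 := norm_pos_iff.1 hξpos
  have hηne : η ≠ 0 := by intro h; rw [h] at hη1; simp at hη1
  set x : EuclideanSpace ℝ (Fin n) := ‖ξ‖⁻¹ • ξ with hxdef
  have hx1 : ‖x‖ = 1 := by rw [hxdef, norm_smul, norm_inv, norm_norm]; field_simp
  have hxne : x ≠ 0 := by intro h; rw [h] at hx1; simp at hx1
  have hfeq : fderiv ℝ φ ξ = fderiv ℝ φ x := by
    have hsx : ‖ξ‖ • x = ξ := by rw [hxdef, smul_smul, mul_inv_cancel₀ hξpos.ne', one_smul]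
    conv_lhs => rw [← hsx]
    exact GCT.fderiv_homog hφ hξpos hxne
  have hgradeq : gradient φ ξ = gradient φ x := by
    unfold gradient
    rw [hfeq]
  set w : EuclideanSpace ℝ (Fin n) := gradient φ x - gradient φ η with hwdef
  have hwV : ∀ i, ⟪α i, -w⟫ = 0 := by
    intro i
    rw [inner_neg_right, hwdef, inner_sub_right, ← hgradeq, hξL i, hηL i]
    ring
  have hcabs : |⟪x, η⟫| ≤ 1 := by
    have := abs_real_inner_le_norm x η
    rw [hx1, hη1] at this; simpa using this
  have hwnorm : ‖w‖ = ‖gradient φ η - gradient φ x‖ := by rw [hwdef, norm_sub_rev]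
  have hF : φ η - fderiv ℝ φ x η = ⟪η, -w⟫ := by
    have e1 : ⟪η, gradient φ x⟫ = fderiv ℝ φ x η := by
      rw [real_inner_comm]; exact GCT.grad_inner hφ x η
    have e2 : ⟪η, gradient φ η⟫ = φ η := by
      rw [real_inner_comm, GCT.grad_inner hφ η η]
      exact GCT.euler hφ hηne
    rw [inner_neg_right, hwdef, inner_sub_right]
    linarith [e1, e2]
  have hFle : φ η - fderiv ℝ φ x η ≤ (K ^ 2)⁻¹ * ‖w‖ := by
    rcases eq_or_ne w 0 with hw0 | hwne
    · rw [hF, hw0]; simp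
    · have hwpos : (0:ℝ) < ‖w‖ := norm_pos_iff.2 hwne
      have hA := hang (-w) (neg_ne_zero.2 hwne) hwV
      have hnw : ‖(-w : EuclideanSpace ℝ (Fin n))‖ = ‖w‖ := norm_neg w
      have hqabs : |⟪η, -w⟫ / ‖w‖| ≤ 1 := by
        rw [abs_div, abs_of_pos hwpos, div_le_one hwpos]
        have := abs_real_inner_le_norm η (-w)
        rw [hη1, hnw] at this; simpa using this
      have hangval : ang η (-w) = arccos (⟪η, -w⟫ / ‖w‖) := by
        rw [ang, hη1, hnw, one_mul]
      rw [hangval] at hA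
      have hmem1 : π / 2 - (K ^ 2)⁻¹ ∈ Set.Icc 0 π := by
        constructor
        · have hπ : 3 < π := Real.pi_gt_three; linarith
        · have hπ : 0 < π := Real.pi_pos; linarith [hinvpos]
      have hmem2 : arccos (⟪η, -w⟫ / ‖w‖) ∈ Set.Icc 0 π :=
        ⟨Real.arccos_nonneg _, Real.arccos_le_pi _⟩
      have hcoslt := Real.strictAntiOn_cos hmem1 hmem2 hA
      rw [Real.cos_arccos (by linarith [(abs_le.1 hqabs).1]) (by linarith [(abs_le.1 hqabs).2]),
        Real.cos_pi_div_two_sub] at hcoslt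
      have hsin : sin ((K ^ 2)⁻¹) ≤ (K ^ 2)⁻¹ := Real.sin_le hinvpos.le
      have hq : ⟪η, -w⟫ / ‖w‖ ≤ (K ^ 2)⁻¹ := le_trans hcoslt.le hsin
      rw [hF]
      calc ⟪η, -w⟫ = (⟪η, -w⟫ / ‖w‖) * ‖w‖ := by field_simp
      _ ≤ (K ^ 2)⁻¹ * ‖w‖ := mul_le_mul_of_nonneg_right hq hwpos.le
  have hanggoal : ang ξ η = arccos ⟪x, η⟫ := by
    rw [ang, hη1, mul_one]
    congr 1
    rw [hxdef, real_inner_smul_left]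
    field_simp
  rw [hanggoal]
  rcases lt_or_ge ⟪x, η⟫ 0 with hneg | hpos
  · exfalso
    obtain ⟨hfar1, hfar2⟩ := GCT.far hφ hn hx1 hη1 hneg
    rw [← hwnorm] at hfar2
    have h1 : (K ^ 2)⁻¹ * ‖w‖ ≤ (K ^ 2)⁻¹ * 12 := mul_le_mul_of_nonneg_left hfar2 hinvpos.le
    have h2 : (K ^ 2)⁻¹ * 12 ≤ (1/10000) * 12 := mul_le_mul_of_nonneg_right hinv (by norm_num)
    linarith [hFle, hfar1]
  · have hch := GCT.chord hφ hx1 hη1 hpos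
    rw [map_sub, GCT.euler hφ hxne] at hch
    have hlip := GCT.lip hφ hx1 hη1 hpos
    rw [← hwnorm] at hlip
    set d : ℝ := ‖η - x‖ with hd
    have hdnn : (0:ℝ) ≤ d := norm_nonneg _
    have hFd : (1/8) * d ^ 2 ≤ φ η - fderiv ℝ φ x η := by linarith
    have hθc : cos (arccos ⟪x, η⟫) = ⟪x, η⟫ :=
      Real.cos_arccos (by linarith [(abs_le.1 hcabs).1]) (by linarith [(abs_le.1 hcabs).2])
    set θ : ℝ := arccos ⟪x, η⟫ with hθ
    have hθ0 : (0:ℝ) ≤ θ := Real.arccos_nonneg _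
    have hθhalf : θ ≤ π / 2 := Real.arccos_le_pi_div_two.2 hpos
    have hcomm : ⟪η, x⟫ = ⟪x, η⟫ := real_inner_comm x η
    have hd2 : d ^ 2 = 2 - 2 * ⟪x, η⟫ := by
      rw [hd, norm_sub_sq_real, hη1, hx1, hcomm]; ring
    rcases eq_or_lt_of_le hθ0 with hθeq | hθpos
    · rw [← hθeq]; positivity
    · have hπ : π < 3.15 := Real.pi_lt_d2
      have ht1 : θ / 2 ≤ 1 := by linarith
      have hs3 : θ/2 - (θ/2)^3/4 < sin (θ/2) := by
          have := Real.sin_gt_sub_cube (by linarith : (0:ℝ) < θ/2)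
          linarith [pow_nonneg (by linarith : (0:ℝ) ≤ θ/2) 3]
      have hid : cos θ = 1 - 2 * sin (θ/2) ^ 2 := by
        have h1 := Real.cos_two_mul (θ/2)
        have h2 := Real.sin_sq_add_cos_sq (θ/2)
        have h3 : (2:ℝ) * (θ/2) = θ := by ring
        rw [h3] at h1
        linarith
      have hsinlb : θ / 4 ≤ sin (θ/2) := by
        have := GCT.arith_sin (by linarith : (0:ℝ) ≤ θ/2) ht1 hs3
        linarith
      have hsin0 : (0:ℝ) ≤ sin (θ/2) := by linarith
      have hdsin : d ^ 2 = 4 * sin (θ/2) ^ 2 := by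
        rw [hd2, ← hθc, hid]; ring
      have hθled : θ ≤ 2 * d := GCT.arith_theta hdsin hsinlb hθ0 hdnn
      have hdle : d ≤ 24 * (K ^ 2)⁻¹ := by
        rcases eq_or_lt_of_le hdnn with hdeq | hdpos
        · rw [← hdeq]; positivity
        · by_contra hcon
          push_neg at hcon
          have hmul := mul_lt_mul_of_pos_right hcon hdpos
          have hstep := mul_le_mul_of_nonneg_left hlip hinvpos.le
          linarith [hFle, hFd, hmul, hstep]
      linarith [hθled, hdle, hinvpos]
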